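/- Let (v,ε) satisfy 1/3 + ε ≤ v ≤ 1/2 − ε and 0 < ε ≤ 1/12, and define g_{v,ε}(x,y) = (36/(1+8a))·( 1_{R1∪R4}(x,y) − 1_{R2∪R3}(x,y) ), where R1 = [v−ε,v)×[3/4,5/6], R2 = [v−ε,v)×[2/3,3/4), R3 = [v,v+ε]×[3/4,5/6], R4 = [v,v+ε]×[2/3,3/4), and a = 2ln(27/16). Then for every pair (p,q) with p ≤ q and (p,q) ∉ R1∪R2∪R3∪R4, the four integrals ∫∫_{[0,p]×[0,q]} g_{v,ε}, ∫∫_{[0,p]×[q,1]} g_{v,ε}, ∫∫_{[p,1]×[0,q]} g_{v,ε}, ∫∫_{[p,1]×[q,1]} g_{v,ε} all vanish. -/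

import Mathlib

open MeasureTheory Set

/-- The normalization constant a = 2·ln(27/16). -/
noncomputable def aNorm : ℝ := 2 * Real.log (27 / 16)

/-- The perturbation density g_{v,ε}. -/
noncomputable def gPert (v ε : ℝ) : ℝ × ℝ → ℝ := fun z =>
  (36 / (1 + 8 * aNorm)) *
    (((Set.Ico (v - ε) v ×ˢ Set.Icc (3/4:ℝ) (5/6))
        ∪ (Set.Icc v (v + ε) ×ˢ Set.Ico (2/3:ℝ) (3/4))).indicator (fun _ => (1:ℝ)) z
      - ((Set.Ico (v - ε) v ×ˢ Set.Ico (2/3:ℝ) (3/4))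
        ∪ (Set.Icc v (v + ε) ×ˢ Set.Icc (3/4:ℝ) (5/6))).indicator (fun _ => (1:ℝ)) z)

/-!
The density factors as `g_{v,ε}(x, y) = c · φ(x) · ψ(y)` with
`φ = 1_{[v-ε,v)} - 1_{[v,v+ε]}` and `ψ = 1_{[3/4,5/6]} - 1_{[2/3,3/4)}`, so by Fubini its integral
over `S × T` is `c · (∫_S φ) · (∫_T ψ)`. Each of `φ`, `ψ` is the difference of the indicators of
the two equal-length halves of an interval `J`, so it integrates to zero over any `S` that misses
`J` or contains it. As `(p, q) ∉ [v-ε,v+ε] × [2/3,5/6]`, either `p ∉ [v-ε,v+ε] ⊆ [0,1]` or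
`q ∉ [2/3,5/6] ⊆ [0,1]`, and then both `[0,p]`, `[p,1]` (resp. `[0,q]`, `[q,1]`) miss or contain `J`.
-/

theorem indicator_union_prod_sub_indicator_union_prod {α β R : Type*} [Ring R]
    {A B : Set α} {C D : Set β} (hAB : Disjoint A B) (z : α × β) :
    ((A ×ˢ C) ∪ (B ×ˢ D)).indicator (fun _ => (1 : R)) z
        - ((A ×ˢ D) ∪ (B ×ˢ C)).indicator (fun _ => (1 : R)) z
      = (A.indicator 1 z.1 - B.indicator 1 z.1) * (C.indicator 1 z.2 - D.indicator 1 z.2) := by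
  have hAC_BD : Disjoint (A ×ˢ C) (B ×ˢ D) := disjoint_prod.2 (Or.inl hAB)
  have hAD_BC : Disjoint (A ×ˢ D) (B ×ˢ C) := disjoint_prod.2 (Or.inl hAB)
  rw [indicator_union_of_disjoint hAC_BD, indicator_union_of_disjoint hAD_BC]
  obtain ⟨x, y⟩ := z
  simp only [← Pi.one_def, indicator_prod_one]
  noncomm_ring

theorem setIntegral_indicator_one_sub_indicator_one {α : Type*} [MeasurableSpace α]
    {μ : Measure α} {A B : Set α} (hA : MeasurableSet A) (hB : MeasurableSet B)
    (hμA : μ A ≠ ⊤) (hμB : μ B ≠ ⊤) (S : Set α) :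
    ∫ x in S, (A.indicator 1 x - B.indicator 1 x) ∂μ = μ.real (A ∩ S) - μ.real (B ∩ S) := by
  have integrable_indicator {E : Set α} (hE : MeasurableSet E) (hμE : μ E ≠ ⊤) :
      Integrable (E.indicator (1 : α → ℝ)) (μ.restrict S) :=
    ((integrable_indicator_iff hE).2 (integrableOn_const hμE)).restrict
  rw [integral_sub (integrable_indicator hA hμA) (integrable_indicator hB hμB),
    integral_indicator_one hA, integral_indicator_one hB,
    measureReal_restrict_apply hA, measureReal_restrict_apply hB]

theorem volume_real_Ico_inter_eq_Icc_inter {a m b : ℝ} (hm : m - a = b - m) {S : Set ℝ}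
    (hS : Disjoint S (Icc a b) ∨ Icc a b ⊆ S) :
    volume.real (Ico a m ∩ S) = volume.real (Icc m b ∩ S) := by
  have hIco : Ico a m ⊆ Icc a b := fun x hx => ⟨hx.1, by linarith [hx.1, hx.2]⟩
  have hIcc : Icc m b ⊆ Icc a b := fun x hx => ⟨by linarith [hx.1, hx.2], hx.2⟩
  rcases hS with hdisj | hsub
  · rw [(hdisj.symm.mono_left hIco).inter_eq, (hdisj.symm.mono_left hIcc).inter_eq]
  · rw [inter_eq_left.2 (hIco.trans hsub), inter_eq_left.2 (hIcc.trans hsub),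
      Real.volume_real_Ico, Real.volume_real_Icc, hm]

theorem Icc_disjoint_or_subset_of_notMem {α : Type*} [LinearOrder α] {a b c d p : α}
    (hc : c ≤ a) (hd : b ≤ d) (hp : p ∉ Icc a b) :
    (Disjoint (Icc c p) (Icc a b) ∨ Icc a b ⊆ Icc c p) ∧
      (Disjoint (Icc p d) (Icc a b) ∨ Icc a b ⊆ Icc p d) := by
  rw [mem_Icc, not_and_or, not_le, not_le] at hp
  rcases hp with hpa | hbp
  · exact ⟨Or.inl (disjoint_left.2 fun x hx hx' => (hx.2.trans_lt hpa).not_ge hx'.1),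
      Or.inr (Icc_subset_Icc hpa.le hd)⟩
  · exact ⟨Or.inr (Icc_subset_Icc hc hbp.le),
      Or.inl (disjoint_left.2 fun x hx hx' => (hx'.2.trans_lt hbp).not_ge hx.1)⟩

theorem gPert_eq_mul (v ε : ℝ) (z : ℝ × ℝ) :
    gPert v ε z = 36 / (1 + 8 * aNorm) *
      (((Ico (v - ε) v).indicator 1 z.1 - (Icc v (v + ε)).indicator 1 z.1) *
        ((Icc (3/4 : ℝ) (5/6)).indicator 1 z.2 - (Ico (2/3 : ℝ) (3/4)).indicator 1 z.2)) := by
  have hdisj : Disjoint (Ico (v - ε) v) (Icc v (v + ε)) :=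
    disjoint_left.2 fun x hx hx' => hx.2.not_ge hx'.1
  rw [gPert, indicator_union_prod_sub_indicator_union_prod hdisj]

theorem setIntegral_gPert_prod (v ε : ℝ) (S T : Set ℝ) :
    ∫ z in S ×ˢ T, gPert v ε z = 36 / (1 + 8 * aNorm) *
      ((volume.real (Ico (v - ε) v ∩ S) - volume.real (Icc v (v + ε) ∩ S)) *
        (volume.real (Icc (3/4 : ℝ) (5/6) ∩ T) - volume.real (Ico (2/3 : ℝ) (3/4) ∩ T))) := by
  simp_rw [gPert_eq_mul]
  rw [integral_const_mul, Measure.volume_eq_prod,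
    setIntegral_prod_mul (fun x => (Ico (v - ε) v).indicator 1 x - (Icc v (v + ε)).indicator 1 x)
      (fun y => (Icc (3/4 : ℝ) (5/6)).indicator 1 y - (Ico (2/3 : ℝ) (3/4)).indicator 1 y),
    setIntegral_indicator_one_sub_indicator_one measurableSet_Ico measurableSet_Icc
      measure_Ico_lt_top.ne measure_Icc_lt_top.ne,
    setIntegral_indicator_one_sub_indicator_one measurableSet_Icc measurableSet_Ico
      measure_Icc_lt_top.ne measure_Ico_lt_top.ne]

theorem setIntegral_gPert_prod_eq_zero_of_left (v ε : ℝ) {S : Set ℝ}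
    (hS : Disjoint S (Icc (v - ε) (v + ε)) ∨ Icc (v - ε) (v + ε) ⊆ S) (T : Set ℝ) :
    ∫ z in S ×ˢ T, gPert v ε z = 0 := by
  rw [setIntegral_gPert_prod, volume_real_Ico_inter_eq_Icc_inter (by ring) hS, sub_self,
    zero_mul, mul_zero]

theorem setIntegral_gPert_prod_eq_zero_of_right (v ε : ℝ) (S : Set ℝ) {T : Set ℝ}
    (hT : Disjoint T (Icc (2/3 : ℝ) (5/6)) ∨ Icc (2/3 : ℝ) (5/6) ⊆ T) :
    ∫ z in S ×ˢ T, gPert v ε z = 0 := by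
  rw [setIntegral_gPert_prod, ← volume_real_Ico_inter_eq_Icc_inter (by norm_num) hT, sub_self,
    mul_zero, mul_zero]

theorem gPert_integrals_vanish_general
    (v ε : ℝ)
    (hv1 : 1/3 + ε ≤ v) (hv2 : v ≤ 1/2 - ε)
    (p q : ℝ)
    (hout : (p, q) ∉ (Set.Ico (v - ε) v ×ˢ Set.Icc (3/4:ℝ) (5/6))
        ∪ (Set.Ico (v - ε) v ×ˢ Set.Ico (2/3:ℝ) (3/4))
        ∪ (Set.Icc v (v + ε) ×ˢ Set.Icc (3/4:ℝ) (5/6))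
        ∪ (Set.Icc v (v + ε) ×ˢ Set.Ico (2/3:ℝ) (3/4))) :
    (∫ z in (Set.Icc (0:ℝ) p ×ˢ Set.Icc (0:ℝ) q), gPert v ε z) = 0 ∧
    (∫ z in (Set.Icc (0:ℝ) p ×ˢ Set.Icc q 1), gPert v ε z) = 0 ∧
    (∫ z in (Set.Icc p 1 ×ˢ Set.Icc (0:ℝ) q), gPert v ε z) = 0 ∧
    (∫ z in (Set.Icc p 1 ×ˢ Set.Icc q 1), gPert v ε z) = 0 := by
  have hpq_out : p ∉ Icc (v - ε) (v + ε) ∨ q ∉ Icc (2/3 : ℝ) (5/6) := by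
    rw [← not_and_or]
    rintro ⟨⟨hp₁, hp₂⟩, hq₁, hq₂⟩
    apply hout
    simp only [mem_union, mem_prod, mem_Ico, mem_Icc]
    rcases lt_or_ge p v with hp | hp <;> rcases lt_or_ge q (3/4) with hq | hq <;> tauto
  rcases hpq_out with hp | hq
  · obtain ⟨hlow, hhigh⟩ :=
      Icc_disjoint_or_subset_of_notMem (c := 0) (d := 1) (by linarith) (by linarith) hp
    exact ⟨setIntegral_gPert_prod_eq_zero_of_left v ε hlow _,
      setIntegral_gPert_prod_eq_zero_of_left v ε hlow _,
      setIntegral_gPert_prod_eq_zero_of_left v ε hhigh _,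
      setIntegral_gPert_prod_eq_zero_of_left v ε hhigh _⟩
  · obtain ⟨hlow, hhigh⟩ :=
      Icc_disjoint_or_subset_of_notMem (c := 0) (d := 1) (by norm_num) (by norm_num) hq
    exact ⟨setIntegral_gPert_prod_eq_zero_of_right v ε _ hlow,
      setIntegral_gPert_prod_eq_zero_of_right v ε _ hhigh,
      setIntegral_gPert_prod_eq_zero_of_right v ε _ hlow,
      setIntegral_gPert_prod_eq_zero_of_right v ε _ hhigh⟩

/-- If (p,q) with p ≤ q avoids the four perturbation rectangles, then the integrals
of g_{v,ε} over the four quadrant products determined by (p,q) all vanish. -/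
theorem gPert_integrals_vanish
    (v ε : ℝ) (hε : 0 < ε) (hε12 : ε ≤ 1/12)
    (hv1 : 1/3 + ε ≤ v) (hv2 : v ≤ 1/2 - ε)
    (p q : ℝ) (hpq : p ≤ q)
    (hout : (p, q) ∉ (Set.Ico (v - ε) v ×ˢ Set.Icc (3/4:ℝ) (5/6))
        ∪ (Set.Ico (v - ε) v ×ˢ Set.Ico (2/3:ℝ) (3/4))
        ∪ (Set.Icc v (v + ε) ×ˢ Set.Icc (3/4:ℝ) (5/6))
        ∪ (Set.Icc v (v + ε) ×ˢ Set.Ico (2/3:ℝ) (3/4))) :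
    (∫ z in (Set.Icc (0:ℝ) p ×ˢ Set.Icc (0:ℝ) q), gPert v ε z) = 0 ∧
    (∫ z in (Set.Icc (0:ℝ) p ×ˢ Set.Icc q 1), gPert v ε z) = 0 ∧
    (∫ z in (Set.Icc p 1 ×ˢ Set.Icc (0:ℝ) q), gPert v ε z) = 0 ∧
    (∫ z in (Set.Icc p 1 ×ˢ Set.Icc q 1), gPert v ε z) = 0 :=
  gPert_integrals_vanish_general v ε hv1 hv2 p q hout
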